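/- arXiv:1907.09139 — 2 statements merged into one kernel-verified Lean document; each statement's English description precedes it below -/
import Mathlib

section
/- The Green's function g(x,y) on Σ_N^+ × Σ_N^+ satisfies the bound 0 ≤ g(x,y) ≤ (2ρ(x,y) - 3)/N for all x ≠ y with ρ(x,y) ≥ 2, and g(x,y) = 0 when ρ(x,y) = 1. -/
noncomputable def rho (N : ℕ) (x y : ℕ → Fin N) : ℕ := sInf {i | x i ≠ y i} + 1

/-- `V_m`: the sequences that are constant from position `m+1` onward. -/
def Vset (N m : ℕ) : Set (ℕ → Fin N) := {x | ∀ i, m ≤ i → x i = x m}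

open Classical in
/-- `χ_r^m`: the indicator of the cylinder `[r_1 ⋯ r_{m+1}]` (first `m+1` coordinates of `r`). -/
noncomputable def chi (N m : ℕ) (r x : ℕ → Fin N) : ℝ := if ∀ i ≤ m, x i = r i then 1 else 0

open Classical in
/-- The entries of `G_m`: `2/N` on the diagonal, `1/N` for distinct `m`-related points,
`0` otherwise. -/
noncomputable def Gmat (N m : ℕ) (r s : ℕ → Fin N) : ℝ :=
  if r = s then 2 / N else if ∀ i < m, r i = s i then 1 / N else 0

/-- The Green's function
`g(x,y) = Σ_{m=1}^{ρ(x,y)-1} Σ_{r,s ∈ V_m \ V_{m-1}} (G_m)_{rs} χ_r^m(x) χ_s^m(y)`. -/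
noncomputable def green (N : ℕ) (x y : ℕ → Fin N) : ℝ :=
  ∑ m ∈ Finset.Icc 1 (rho N x y - 1),
    ∑ᶠ r ∈ Vset N m \ Vset N (m - 1), ∑ᶠ s ∈ Vset N m \ Vset N (m - 1),
      Gmat N m r s * chi N m r x * chi N m s y

/-! Each cylinder of length `m + 1` contains exactly one point of `V_m`, so in the `m`-th summand
of `g(x,y)` only `r` and `s` equal to the truncations of `x` and `y` at level `m` survive, and the
summand is a single entry of `G_m`: nonnegative and at most `2/N`. For `m = ρ(x,y) - 1` the two
truncations differ at position `m`, so that entry is off-diagonal and at most `1/N`. Summing,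
`g(x,y) ≤ (ρ - 2) · 2/N + 1/N`. -/

/-- `trunc m x` freezes `x` from position `m` on; it is the point of `V_m` whose cylinder
`[x_1 ⋯ x_{m+1}]` contains `x`. -/
def trunc {α : Type*} (m : ℕ) (x : ℕ → α) : ℕ → α := fun i => x (min i m)

@[simp]
lemma trunc_self {α : Type*} (m : ℕ) (x : ℕ → α) : trunc m x m = x m := by
  simp [trunc]

lemma eq_trunc_of_mem_Vset {N m : ℕ} {s y : ℕ → Fin N} (hs : s ∈ Vset N m)
    (h : ∀ i ≤ m, y i = s i) : s = trunc m y := by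
  funext i
  rcases le_or_gt i m with hi | hi
  · simp [trunc, min_eq_left hi, h i hi]
  · simp [trunc, min_eq_right hi.le, hs i hi.le, h m le_rfl]

lemma chi_trunc_self (N m : ℕ) (y : ℕ → Fin N) : chi N m (trunc m y) y = 1 :=
  if_pos fun i hi => by simp [trunc, min_eq_left hi]

lemma chi_eq_zero_of_ne_trunc {N m : ℕ} {s y : ℕ → Fin N} (hs : s ∈ Vset N m)
    (hne : s ≠ trunc m y) : chi N m s y = 0 :=
  if_neg fun h => hne (eq_trunc_of_mem_Vset hs h)

open Classical in
lemma finsum_mem_mul_chi {N m : ℕ} {D : Set (ℕ → Fin N)} (hD : D ⊆ Vset N m)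
    (f : (ℕ → Fin N) → ℝ) (y : ℕ → Fin N) :
    ∑ᶠ s ∈ D, f s * chi N m s y = if trunc m y ∈ D then f (trunc m y) else 0 := by
  rw [finsum_mem_def, finsum_eq_single _ (trunc m y)]
  · simp only [Set.indicator_apply, chi_trunc_self, mul_one]
  · intro s hs
    rw [Set.indicator_apply]
    split_ifs with hsD
    · rw [chi_eq_zero_of_ne_trunc (hD hsD) hs, mul_zero]
    · rfl

open Classical in
noncomputable def greenTerm (N m : ℕ) (x y : ℕ → Fin N) : ℝ :=
  if trunc m x ∈ Vset N m \ Vset N (m - 1) ∧ trunc m y ∈ Vset N m \ Vset N (m - 1) then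
    Gmat N m (trunc m x) (trunc m y)
  else 0

lemma green_eq_sum_greenTerm (N : ℕ) (x y : ℕ → Fin N) :
    green N x y = ∑ m ∈ Finset.Icc 1 (rho N x y - 1), greenTerm N m x y := by
  refine Finset.sum_congr rfl fun m _ => ?_
  have hD : Vset N m \ Vset N (m - 1) ⊆ Vset N m := Set.sdiff_subset
  simp only [finsum_mem_mul_chi hD, greenTerm]
  by_cases hy : trunc m y ∈ Vset N m \ Vset N (m - 1)
  · simp only [if_pos hy]
    rw [finsum_mem_mul_chi hD (Gmat N m · (trunc m y)) x]
    by_cases hx : trunc m x ∈ Vset N m \ Vset N (m - 1) <;>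
      simp only [hx, hy, if_true, if_false, and_true]
  · simp only [hy, if_false, and_false, finsum_mem_zero]

lemma Gmat_nonneg (N m : ℕ) (r s : ℕ → Fin N) : 0 ≤ Gmat N m r s := by
  unfold Gmat
  split_ifs <;> positivity

lemma Gmat_le_of_ne {N m : ℕ} {r s : ℕ → Fin N} (h : r ≠ s) : Gmat N m r s ≤ 1 / N := by
  unfold Gmat
  rw [if_neg h]
  split_ifs
  exacts [le_rfl, by positivity]

lemma Gmat_le (N m : ℕ) (r s : ℕ → Fin N) : Gmat N m r s ≤ 2 / N := by
  by_cases h : r = s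
  · simp [Gmat, h]
  · exact (Gmat_le_of_ne h).trans (div_le_div_of_nonneg_right one_le_two N.cast_nonneg)

lemma greenTerm_nonneg (N m : ℕ) (x y : ℕ → Fin N) : 0 ≤ greenTerm N m x y := by
  unfold greenTerm
  split_ifs
  exacts [Gmat_nonneg .., le_rfl]

lemma greenTerm_le (N m : ℕ) (x y : ℕ → Fin N) : greenTerm N m x y ≤ 2 / N := by
  unfold greenTerm
  split_ifs
  exacts [Gmat_le .., by positivity]

lemma greenTerm_le_of_ne {N m : ℕ} {x y : ℕ → Fin N} (h : x m ≠ y m) :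
    greenTerm N m x y ≤ 1 / N := by
  have hne : trunc m x ≠ trunc m y := fun he => h (by simpa using congrFun he m)
  unfold greenTerm
  split_ifs
  exacts [Gmat_le_of_ne hne, by positivity]

lemma apply_rho_sub_one_ne {N : ℕ} {x y : ℕ → Fin N} (h : 2 ≤ rho N x y) :
    x (rho N x y - 1) ≠ y (rho N x y - 1) := by
  have hS : sInf {i | x i ≠ y i} ≠ 0 := by unfold rho at h; omega
  have hne : {i | x i ≠ y i}.Nonempty :=
    Set.nonempty_iff_ne_empty.2 fun he => hS (Nat.sInf_eq_zero.2 (Or.inr he))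
  simpa [rho] using Nat.sInf_mem hne

lemma sum_Icc_le_nsmul_add {M : Type*} [AddCommMonoid M] [PartialOrder M]
    [IsOrderedAddMonoid M] {f : ℕ → M} {a b : M} (n : ℕ) (h : ∀ m ∈ Finset.Icc 1 n, f m ≤ a)
    (hlast : f (n + 1) ≤ b) : ∑ m ∈ Finset.Icc 1 (n + 1), f m ≤ n • a + b := by
  rw [Finset.sum_Icc_succ_top (by omega)]
  grw [Finset.sum_le_card_nsmul _ f a h, hlast, Nat.card_Icc, Nat.add_sub_cancel]

lemma green_nonneg (N : ℕ) (x y : ℕ → Fin N) : 0 ≤ green N x y := by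
  rw [green_eq_sum_greenTerm]
  exact Finset.sum_nonneg fun m _ => greenTerm_nonneg N m x y

lemma green_le (N : ℕ) {x y : ℕ → Fin N} (h : 2 ≤ rho N x y) :
    green N x y ≤ (2 * (rho N x y : ℝ) - 3) / N := by
  obtain ⟨n, hn⟩ : ∃ n, rho N x y = n + 2 := ⟨rho N x y - 2, by omega⟩
  have hlast : greenTerm N (n + 1) x y ≤ 1 / N :=
    greenTerm_le_of_ne (by simpa [hn] using apply_rho_sub_one_ne h)
  calc green N x y = ∑ m ∈ Finset.Icc 1 (n + 1), greenTerm N m x y := by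
        rw [green_eq_sum_greenTerm, hn]
        rfl
    _ ≤ n • (2 / N : ℝ) + 1 / N :=
        sum_Icc_le_nsmul_add n (fun m _ => greenTerm_le N m x y) hlast
    _ = (2 * (rho N x y : ℝ) - 3) / N := by
        rw [hn, nsmul_eq_mul]
        push_cast
        ring

lemma green_eq_zero_of_rho_eq_one (N : ℕ) {x y : ℕ → Fin N} (h : rho N x y = 1) :
    green N x y = 0 := by
  simp [green, h]

theorem green_function_bounds_general (N : ℕ) (x y : ℕ → Fin N) :
    (2 ≤ rho N x y →
      0 ≤ green N x y ∧ green N x y ≤ (2 * (rho N x y : ℝ) - 3) / N) ∧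
    (rho N x y = 1 → green N x y = 0) :=
  ⟨fun h => ⟨green_nonneg N x y, green_le N h⟩, green_eq_zero_of_rho_eq_one N⟩

/-- Bounds on the Green's function: for `x ≠ y` with `ρ(x,y) ≥ 2`,
`0 ≤ g(x,y) ≤ (2ρ(x,y)-3)/N`, and `g(x,y) = 0` when `ρ(x,y) = 1`. -/
theorem green_function_bounds (N : ℕ) (hN : 2 ≤ N) (x y : ℕ → Fin N) (hxy : x ≠ y) :
    (2 ≤ rho N x y →
      0 ≤ green N x y ∧ green N x y ≤ (2 * (rho N x y : ℝ) - 3) / N) ∧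
    (rho N x y = 1 → green N x y = 0) :=
  green_function_bounds_general N x y
end

section
/- For x ∈ Σ_N^+ not in V_* (i.e., x is not eventually constant), g(x,x) = ∞; equivalently, the partial sums Σ_{m=1}^{M} Σ_{r,s} (G_m)_{rs} χ_r^m(x) χ_s^m(x) are unbounded as M → ∞ whenever x has infinitely many indices m with x_m ≠ x_{m+1}. -/
open Classical

lemma finsum_mem_single' {α : Type*} (A : Set α) (f : α → ℝ) (a : α) (ha : a ∈ A)
    (h : ∀ b ∈ A, b ≠ a → f b = 0) : ∑ᶠ b ∈ A, f b = f a := by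
  rw [finsum_mem_def]
  rw [finsum_eq_single _ a]
  · simp [Set.indicator_of_mem ha]
  · intro b hb
    by_cases hbA : b ∈ A
    · simp [Set.indicator_of_mem hbA, h b hbA hb]
    · simp [Set.indicator_of_notMem hbA]

lemma term_eval (N m : ℕ) (x : ℕ → Fin N) (hm : 1 ≤ m) :
    (∑ᶠ r ∈ Vset N m \ Vset N (m - 1), ∑ᶠ s ∈ Vset N m \ Vset N (m - 1),
      Gmat N m r s * chi N m r x * chi N m s x)
    = if x (m - 1) = x m then (0:ℝ) else 2 / (N:ℝ) := by
  set A := Vset N m \ Vset N (m - 1) with hA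
  set r0 : ℕ → Fin N := fun i => if i ≤ m then x i else x m with hr0
  have hr0m : r0 m = x m := by simp [hr0]
  have hr0Vm : r0 ∈ Vset N m := by
    intro i hi
    simp only [hr0]
    rcases eq_or_lt_of_le hi with h | h
    · simp [← h]
    · simp [not_le.mpr h]
  have hchi0 : chi N m r0 x = 1 := by
    simp only [chi, hr0]
    rw [if_pos]
    intro i hi; simp [hi]
  have huniq : ∀ r, r ∈ Vset N m → chi N m r x ≠ 0 → r = r0 := by
    intro r hr hc
    have hagree : ∀ i ≤ m, x i = r i := by
      by_contra h; simp [chi, h] at hc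
    funext i
    by_cases hi : i ≤ m
    · simp [hr0, hi, (hagree i hi).symm]
    · push_neg at hi
      have h2 : r0 i = x m := by simp [hr0, not_le.mpr hi]
      rw [h2, hr i hi.le, ← hagree m le_rfl]
  by_cases hxm : x (m - 1) = x m
  · rw [if_pos hxm]
    have hz : ∀ r ∈ A, (∑ᶠ s ∈ A, Gmat N m r s * chi N m r x * chi N m s x) = 0 := by
      intro r hr
      have : chi N m r x = 0 := by
        by_contra hc
        have := huniq r hr.1 hc
        subst this
        exact hr.2 (by
          intro i hi
          have h1 : r0 (m - 1) = x (m - 1) := by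
            simp [hr0, Nat.sub_le m 1]
          rcases eq_or_lt_of_le hi with h | h
          · rw [← h]
          · have him : m ≤ i := by omega
            rw [hr0Vm i him, hr0m, h1, hxm])
      simp only [this, mul_zero, zero_mul]
      exact finsum_mem_of_eqOn_zero (fun s _ => rfl)
    calc ∑ᶠ r ∈ A, ∑ᶠ s ∈ A, Gmat N m r s * chi N m r x * chi N m s x
        = ∑ᶠ r ∈ A, (0:ℝ) := finsum_mem_congr rfl hz
      _ = 0 := by simp
  · rw [if_neg hxm]
    have hr0A : r0 ∈ A := by
      refine ⟨hr0Vm, fun h => hxm ?_⟩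
      have h1 : r0 (m - 1) = x (m - 1) := by simp [hr0, Nat.sub_le m 1]
      have := h m (Nat.sub_le m 1)
      rw [hr0m, h1] at this
      exact this.symm
    rw [finsum_mem_single' A _ r0 hr0A]
    · rw [finsum_mem_single' A _ r0 hr0A]
      · simp [Gmat, hchi0]
      · intro s hs hsne
        have : chi N m s x = 0 := by
          by_contra hc; exact hsne (huniq s hs.1 hc)
        simp [this]
    · intro r hr hrne
      have : chi N m r x = 0 := by
        by_contra hc; exact hrne (huniq r hr.1 hc)
      simp only [this, mul_zero, zero_mul]
      exact finsum_mem_of_eqOn_zero (fun s _ => rfl)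

/-- If `x` is not eventually constant (infinitely many `m` with `x_m ≠ x_{m+1}`), then the
partial sums `Σ_{m=1}^{M} Σ_{r,s ∈ V_m \ V_{m-1}} (G_m)_{rs} χ_r^m(x) χ_s^m(x)` are
unbounded as `M → ∞`, i.e. `g(x,x) = ∞`. -/
theorem green_diagonal_infinite (N : ℕ) (hN : 2 ≤ N) (x : ℕ → Fin N)
    (hx : {m : ℕ | x m ≠ x (m + 1)}.Infinite) :
    ¬ BddAbove (Set.range fun M : ℕ =>
      ∑ m ∈ Finset.Icc 1 M,
        ∑ᶠ r ∈ Vset N m \ Vset N (m - 1), ∑ᶠ s ∈ Vset N m \ Vset N (m - 1),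
          Gmat N m r s * chi N m r x * chi N m s x) := by
  rintro ⟨C, hC⟩
  have hNpos : (0:ℝ) < N := by positivity
  obtain ⟨n, hn⟩ := exists_nat_gt (C * N / 2)
  obtain ⟨u, huS, hucard⟩ := hx.exists_subset_card_eq n
  set M := u.sup id + 1 with hM
  have hCM := hC (Set.mem_range_self M)
  rw [Finset.sum_congr rfl (fun m hm => term_eval N m x (Finset.mem_Icc.mp hm).1)] at hCM
  set v := u.image (· + 1) with hv
  have hvsub : v ⊆ Finset.Icc 1 M := by
    intro m hm
    obtain ⟨k, hk, rfl⟩ := Finset.mem_image.mp hm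
    refine Finset.mem_Icc.mpr ⟨by omega, ?_⟩
    have := Finset.le_sup (f := id) hk
    simp only [id_eq] at this
    omega
  have hlow : (n : ℝ) * (2 / N) ≤
      ∑ m ∈ Finset.Icc 1 M, (if x (m - 1) = x m then (0:ℝ) else 2 / N) := by
    have h1 : ∑ m ∈ v, (if x (m - 1) = x m then (0:ℝ) else 2 / N) = n * (2 / N) := by
      rw [Finset.sum_congr rfl (g := fun _ => (2:ℝ)/N)]
      · rw [Finset.sum_const, hv, Finset.card_image_of_injective _ (fun a b => by omega),
          hucard, nsmul_eq_mul]
      · intro m hm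
        obtain ⟨k, hk, rfl⟩ := Finset.mem_image.mp hm
        have : x k ≠ x (k + 1) := huS hk
        simp only [Nat.add_sub_cancel]
        exact if_neg (fun h => this h)
    rw [← h1]
    refine Finset.sum_le_sum_of_subset_of_nonneg hvsub (fun m _ _ => ?_)
    split <;> positivity
  have : C < (n : ℝ) * (2 / N) := by
    rw [mul_div_assoc', lt_div_iff₀ hNpos]
    linarith
  linarith
end
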